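/- arXiv:1610.00999 — 2 statements merged into one kernel-verified Lean document; each statement's English description precedes it below -/
import Mathlib

section
/- Let P be a probability measure, Z a measurable function with E_P[exp(Z)] < ∞, and Q ≪ P with H(Q,P) < ∞ and E_Q[Z⁻] < ∞. Define B_n := {|Z| ≤ n} and Q_n := Q(·|B_n) for n large enough that Q(B_n) > 0. Then H(Q_n,P) → H(Q,P) and E_{Q_n}[Z] → E_Q[Z] as n → ∞; in particular the dual representation of log E_P[exp(Z)] is unchanged when restricting to measures Q under which Z is integrable. -/
open MeasureTheory ENNReal NNReal Real Filter Classical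

noncomputable section

variable {Ω : Type*} [MeasurableSpace Ω]

/-- Relative entropy `H(Q,P) ∈ [0,∞]`, `+∞` if `Q` is not absolutely continuous w.r.t. `P`. -/
def relEntropy (Q P : Measure Ω) : ℝ≥0∞ :=
  if Q ≪ P then
    (∫⁻ ω, ENNReal.ofReal ((Q.rnDeriv P ω).toReal * Real.log (Q.rnDeriv P ω).toReal + 1) ∂P) - 1
  else ⊤

/-- Robust relative entropy `H(Q,Pfam) = inf_{P ∈ Pfam} H(Q,P)`. -/
def robustEntropy (Q : Measure Ω) (Pfam : Set (Measure Ω)) : ℝ≥0∞ :=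
  ⨅ P ∈ Pfam, relEntropy Q P

/-- Positive part of an extended real, valued in `ℝ≥0∞`. -/
def ePos (x : EReal) : ℝ≥0∞ := if x = ⊤ then ⊤ else ENNReal.ofReal x.toReal

/-- Expectation `E_Q[X] = E_Q[X⁺] − E_Q[X⁻]` with value `−∞` when `E_Q[X⁻] = +∞`. -/
def eInt (Q : Measure Ω) (X : Ω → ℝ) : EReal :=
  if (∫⁻ ω, ENNReal.ofReal (-(X ω)) ∂Q) = ⊤ then ⊥
  else ((∫⁻ ω, ENNReal.ofReal (X ω) ∂Q : ℝ≥0∞) : EReal)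
       - ((∫⁻ ω, ENNReal.ofReal (-(X ω)) ∂Q : ℝ≥0∞) : EReal)

/-- Expectation of an `EReal`-valued function, same convention. -/
def eIntE (Q : Measure Ω) (X : Ω → EReal) : EReal :=
  if (∫⁻ ω, ePos (-(X ω)) ∂Q) = ⊤ then ⊥
  else ((∫⁻ ω, ePos (X ω) ∂Q : ℝ≥0∞) : EReal) - ((∫⁻ ω, ePos (-(X ω)) ∂Q : ℝ≥0∞) : EReal)

/-- `log E_P[exp X]` for real-valued `X`, valued in `EReal`. -/
def logMGF (P : Measure Ω) (X : Ω → ℝ) : EReal :=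
  ENNReal.log (∫⁻ ω, ENNReal.ofReal (Real.exp (X ω)) ∂P)

/-- `log E_P[exp X]` for `EReal`-valued `X`. -/
def logMGFE (P : Measure Ω) (X : Ω → EReal) : EReal :=
  ENNReal.log (∫⁻ ω, EReal.exp (X ω) ∂P)

/-- A set is `Pfam`-polar if it is null under every `P ∈ Pfam`. -/
def Polar (Pfam : Set (Measure Ω)) (N : Set Ω) : Prop := ∀ P ∈ Pfam, P N = 0

/-- No-arbitrage `NA(Pfam)` for a one-period market with increment `ΔS`. -/
def NA {d : ℕ} (Pfam : Set (Measure Ω)) (ΔS : Ω → Fin d → ℝ) : Prop :=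
  ∀ h : Fin d → ℝ, Polar Pfam {ω : Ω | ∑ i, h i * ΔS ω i < 0} →
    Polar Pfam {ω : Ω | ∑ i, h i * ΔS ω i ≠ 0}

/-- Convexity of a family of measures. -/
def ConvexFamily (Pfam : Set (Measure Ω)) : Prop :=
  ∀ P₁ ∈ Pfam, ∀ P₂ ∈ Pfam, ∀ t : ℝ≥0, t ≤ 1 →
    ((t : ℝ≥0∞) • P₁ + ((1 - t : ℝ≥0) : ℝ≥0∞) • P₂) ∈ Pfam

/-
With `f = dQ/dP` and `c_n = Q(B_n)`, the conditional measure `Q_n` has density `1_{B_n} f / c_n`,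
so `H(Q_n,P) = c_n⁻¹ E_P[1_{B_n} f log f] − log c_n`. Since `f log f` is `P`-integrable and
`B_n ↑ Ω`, dominated convergence and `c_n → 1` give `H(Q_n,P) → H(Q,P)`.
Young's inequality `f Z ≤ f log f + exp Z` makes `E_Q[Z⁺]` finite whenever `H(Q,P)` and
`E_P[exp Z]` are, so under such `Q` the variable `Z` is integrable as soon as `E_Q[Z⁻] < ∞`.
This gives `E_{Q_n}[Z] → E_Q[Z]`, and it shows that the two suprema run over the same measures.
-/

lemma Real.mul_le_mul_log_add_exp {x : ℝ} (hx : 0 ≤ x) (y : ℝ) :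
    x * y ≤ x * log x + exp y := by
  rcases hx.eq_or_lt with rfl | hx
  · simpa using (exp_pos y).le
  have key : x * (y - log x) ≤ x * exp (y - log x) :=
    mul_le_mul_of_nonneg_left (by linarith [add_one_le_exp (y - log x)]) hx.le
  rw [exp_sub, exp_log hx, mul_div_cancel₀ _ hx.ne'] at key
  linarith

lemma Real.inv_mul_mul_log_inv_mul (c x : ℝ) :
    c⁻¹ * x * log (c⁻¹ * x) = c⁻¹ * (x * log x - log c * x) := by
  have h := negMulLog_mul c⁻¹ x
  simp only [negMulLog, log_inv] at h
  linarith

lemma ENNReal.ofReal_abs (x : ℝ) : ENNReal.ofReal |x| = ENNReal.ofReal x + ENNReal.ofReal (-x) := by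
  rcases le_total x 0 with h | h
  · rw [abs_of_nonpos h, ENNReal.ofReal_of_nonpos h, zero_add]
  · rw [abs_of_nonneg h, ENNReal.ofReal_of_nonpos (neg_nonpos.2 h), add_zero]

lemma ENNReal.ofReal_add_one_sub_one (x : ℝ) : ENNReal.ofReal (x + 1) - 1 = ENNReal.ofReal x := by
  rw [← ENNReal.ofReal_one, ← ENNReal.ofReal_sub _ zero_le_one, add_sub_cancel_right]

open Topology ProbabilityTheory

namespace MeasureTheory

variable {α : Type*} [MeasurableSpace α] {μ : Measure α}

lemma integrable_iff_lintegral_ofReal_ne_top {f : α → ℝ} (hf : AEStronglyMeasurable f μ) :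
    Integrable f μ ↔
      (∫⁻ a, ENNReal.ofReal (f a) ∂μ) ≠ ⊤ ∧ (∫⁻ a, ENNReal.ofReal (-f a) ∂μ) ≠ ⊤ := by
  simp only [Integrable, hf, true_and, hasFiniteIntegral_iff_norm, Real.norm_eq_abs,
    ENNReal.ofReal_abs, lintegral_add_left' hf.aemeasurable.ennreal_ofReal, lt_top_iff_ne_top,
    ENNReal.add_ne_top]

lemma tendsto_setIntegral_of_monotone_of_iUnion_eq_univ {B : ℕ → Set α}
    (hB : ∀ n, MeasurableSet (B n)) (hmono : Monotone B) (hU : ⋃ n, B n = Set.univ)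
    {g : α → ℝ} (hg : Integrable g μ) :
    Tendsto (fun n => ∫ a in B n, g a ∂μ) atTop (𝓝 (∫ a, g a ∂μ)) := by
  have h := tendsto_setIntegral_of_monotone hB hmono (μ := μ) (f := g) (by simpa [hU] using hg)
  simpa [hU] using h

lemma tendsto_measureReal_of_monotone_of_iUnion_eq_univ [IsProbabilityMeasure μ]
    {B : ℕ → Set α} (hmono : Monotone B) (hU : ⋃ n, B n = Set.univ) :
    Tendsto (fun n => μ.real (B n)) atTop (𝓝 1) := by
  have h := tendsto_measure_iUnion_atTop (μ := μ) hmono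
  rw [hU, measure_univ] at h
  simpa [Function.comp_def, measureReal_def] using (ENNReal.tendsto_toReal ENNReal.one_ne_top).comp h

end MeasureTheory

namespace ProbabilityTheory

variable {α : Type*} [MeasurableSpace α]

lemma integral_cond (μ : Measure α) (s : Set α) (g : α → ℝ) :
    ∫ a, g a ∂μ[|s] = (μ.real s)⁻¹ * ∫ a in s, g a ∂μ := by
  rw [cond, integral_smul_measure, ENNReal.toReal_inv, smul_eq_mul, measureReal_def]

lemma _root_.MeasureTheory.Integrable.cond {μ : Measure α} {g : α → ℝ} (hg : Integrable g μ)
    (s : Set α) : Integrable g μ[|s] := by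
  by_cases hs : μ s = 0
  · simp [cond_eq_zero_of_meas_eq_zero hs]
  · exact hg.restrict.smul_measure (ENNReal.inv_ne_top.2 hs)

lemma tendsto_integral_cond_of_monotone_of_iUnion_eq_univ {μ : Measure α}
    [IsProbabilityMeasure μ] {B : ℕ → Set α} (hB : ∀ n, MeasurableSet (B n)) (hmono : Monotone B)
    (hU : ⋃ n, B n = Set.univ) {g : α → ℝ} (hg : Integrable g μ) :
    Tendsto (fun n => ∫ a, g a ∂μ[|B n]) atTop (𝓝 (∫ a, g a ∂μ)) := by
  simp only [integral_cond]
  simpa using ((tendsto_measureReal_of_monotone_of_iUnion_eq_univ hmono hU).inv₀ one_ne_zero).mul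
    (tendsto_setIntegral_of_monotone_of_iUnion_eq_univ hB hmono hU hg)

end ProbabilityTheory

section RelativeEntropy

variable {P Q : Measure Ω}

def entropyDensity (Q P : Measure Ω) (ω : Ω) : ℝ :=
  (Q.rnDeriv P ω).toReal * log (Q.rnDeriv P ω).toReal

lemma measurable_entropyDensity : Measurable (entropyDensity Q P) :=
  (Measure.measurable_rnDeriv Q P).ennreal_toReal.mul
    (Measure.measurable_rnDeriv Q P).ennreal_toReal.log

lemma entropyDensity_add_one_nonneg (ω : Ω) : 0 ≤ entropyDensity Q P ω + 1 := by
  unfold entropyDensity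
  linarith [self_sub_one_le_mul_log (x := (Q.rnDeriv P ω).toReal) ENNReal.toReal_nonneg,
    (Q.rnDeriv P ω).toReal_nonneg]

lemma absolutelyContinuous_of_relEntropy_ne_top (h : relEntropy Q P ≠ ⊤) : Q ≪ P := by
  by_contra hQP
  exact h (if_neg hQP)

lemma integrable_entropyDensity [IsFiniteMeasure P] (h : relEntropy Q P ≠ ⊤) :
    Integrable (entropyDensity Q P) P := by
  rw [relEntropy, if_pos (absolutelyContinuous_of_relEntropy_ne_top h), Ne,
    ENNReal.sub_eq_top_iff] at h
  have hint := (lintegral_ofReal_ne_top_iff_integrable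
    (measurable_entropyDensity.add_const 1).aestronglyMeasurable
    (ae_of_all _ entropyDensity_add_one_nonneg)).1 fun htop => h ⟨htop, ENNReal.one_ne_top⟩
  exact (hint.sub (integrable_const 1)).congr (ae_of_all _ fun ω => by simp)

lemma relEntropy_eq_ofReal_integral [IsProbabilityMeasure P] (hQP : Q ≪ P)
    (hint : Integrable (entropyDensity Q P) P) :
    relEntropy Q P = ENNReal.ofReal (∫ ω, entropyDensity Q P ω ∂P) := by
  have h := ofReal_integral_eq_lintegral_ofReal
    (f := fun ω => entropyDensity Q P ω + 1) (hint.add (integrable_const 1))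
    (ae_of_all _ entropyDensity_add_one_nonneg)
  rw [integral_add hint (integrable_const 1), integral_const, probReal_univ, one_smul] at h
  rw [relEntropy, if_pos hQP, ← ENNReal.ofReal_add_one_sub_one, h]
  rfl

/-- Young's inequality `xy ≤ x log x + eʸ` bounds `E_Q[X⁺]` by `H(Q,P) + E_P[exp X]`. -/
lemma lintegral_ofReal_ne_top_of_relEntropy_ne_top [IsFiniteMeasure P] [IsFiniteMeasure Q]
    {X : Ω → ℝ} (hX : Measurable X) (hexp : ∫⁻ ω, ENNReal.ofReal (exp (X ω)) ∂P ≠ ⊤)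
    (hH : relEntropy Q P ≠ ⊤) :
    ∫⁻ ω, ENNReal.ofReal (X ω) ∂Q ≠ ⊤ := by
  have hexp_int : Integrable (fun ω => exp (X ω)) P :=
    (lintegral_ofReal_ne_top_iff_integrable hX.exp.aestronglyMeasurable
      (ae_of_all _ fun ω => (exp_pos _).le)).1 hexp
  refine (lt_of_le_of_lt ?_ ((integrable_entropyDensity hH).add hexp_int).lintegral_lt_top).ne
  rw [← lintegral_rnDeriv_mul (absolutelyContinuous_of_relEntropy_ne_top hH)
    hX.ennreal_ofReal.aemeasurable]
  refine lintegral_mono_ae ?_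
  filter_upwards [Measure.rnDeriv_lt_top Q P] with ω hfin
  rw [← ENNReal.ofReal_toReal hfin.ne, ← ENNReal.ofReal_mul ENNReal.toReal_nonneg]
  exact ENNReal.ofReal_le_ofReal (mul_le_mul_log_add_exp ENNReal.toReal_nonneg _)

lemma rnDeriv_cond [IsFiniteMeasure Q] [SigmaFinite P] {B : Set Ω} (hB : MeasurableSet B)
    (hQB : Q B ≠ 0) :
    (Q[|B]).rnDeriv P =ᵐ[P] fun ω => (Q B)⁻¹ * B.indicator (Q.rnDeriv P) ω := by
  filter_upwards [Measure.rnDeriv_smul_left_of_ne_top (Q.restrict B) P (ENNReal.inv_ne_top.2 hQB),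
    Measure.rnDeriv_restrict Q P hB] with ω hsmul hrestrict
  rw [ProbabilityTheory.cond, hsmul, Pi.smul_apply, hrestrict, smul_eq_mul]

lemma entropyDensity_cond [IsFiniteMeasure Q] [SigmaFinite P] {B : Set Ω} (hB : MeasurableSet B)
    (hQB : Q B ≠ 0) :
    entropyDensity Q[|B] P =ᵐ[P] B.indicator fun ω =>
      (Q.real B)⁻¹ * (entropyDensity Q P ω - log (Q.real B) * (Q.rnDeriv P ω).toReal) := by
  filter_upwards [rnDeriv_cond hB hQB] with ω hω
  by_cases hωB : ω ∈ B
  · simp [entropyDensity, hω, hωB, measureReal_def, inv_mul_mul_log_inv_mul]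
  · simp [entropyDensity, hω, hωB]

lemma relEntropy_cond [IsProbabilityMeasure P] [IsFiniteMeasure Q] (hQP : Q ≪ P)
    (hint : Integrable (entropyDensity Q P) P) {B : Set Ω} (hB : MeasurableSet B)
    (hQB : Q B ≠ 0) :
    relEntropy Q[|B] P =
      ENNReal.ofReal ((Q.real B)⁻¹ * ∫ ω in B, entropyDensity Q P ω ∂P - log (Q.real B)) := by
  have hint_rnDeriv : Integrable (fun ω => (Q.rnDeriv P ω).toReal) P :=
    Measure.integrable_toReal_rnDeriv
  have hint_cond := ((hint.sub (hint_rnDeriv.const_mul (log (Q.real B)))).const_mul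
    (Q.real B)⁻¹).indicator hB
  have hQB' : Q.real B ≠ 0 := (measureReal_ne_zero_iff (measure_ne_top Q B)).2 hQB
  rw [relEntropy_eq_ofReal_integral (cond_absolutelyContinuous.trans hQP)
      (hint_cond.congr (entropyDensity_cond hB hQB).symm),
    integral_congr_ae (entropyDensity_cond hB hQB), integral_indicator hB, integral_const_mul,
    integral_sub hint.integrableOn (hint_rnDeriv.const_mul _).integrableOn, integral_const_mul,
    Measure.setIntegral_toReal_rnDeriv hQP]
  field_simp

lemma tendsto_relEntropy_cond_of_monotone_of_iUnion_eq_univ [IsProbabilityMeasure P]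
    [IsProbabilityMeasure Q] (hH : relEntropy Q P ≠ ⊤) {B : ℕ → Set Ω}
    (hB : ∀ n, MeasurableSet (B n)) (hmono : Monotone B) (hU : ⋃ n, B n = Set.univ) :
    Tendsto (fun n => relEntropy Q[|B n] P) atTop (𝓝 (relEntropy Q P)) := by
  have hQP := absolutelyContinuous_of_relEntropy_ne_top hH
  have hint := integrable_entropyDensity hH
  have hQB := tendsto_measureReal_of_monotone_of_iUnion_eq_univ (μ := Q) hmono hU
  have hlim : Tendsto (fun n => (Q.real (B n))⁻¹ * ∫ ω in B n, entropyDensity Q P ω ∂P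
      - log (Q.real (B n))) atTop (𝓝 (∫ ω, entropyDensity Q P ω ∂P)) := by
    simpa using ((hQB.inv₀ one_ne_zero).mul
      (tendsto_setIntegral_of_monotone_of_iUnion_eq_univ hB hmono hU hint)).sub
      (hQB.log one_ne_zero)
  rw [relEntropy_eq_ofReal_integral hQP hint]
  refine (ENNReal.tendsto_ofReal hlim).congr' ?_
  filter_upwards [hQB.eventually_ne one_ne_zero] with n hn
  exact (relEntropy_cond hQP hint (hB n) fun h0 => hn (by simp [measureReal_def, h0])).symm

end RelativeEntropy

lemma eInt_eq_integral {μ : Measure Ω} {X : Ω → ℝ} (hX : Integrable X μ) :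
    eInt μ X = ((∫ ω, X ω ∂μ : ℝ) : EReal) := by
  obtain ⟨hpos, hneg⟩ := (integrable_iff_lintegral_ofReal_ne_top hX.1).1 hX
  rw [eInt, if_neg hneg, integral_eq_lintegral_pos_part_sub_lintegral_neg_part hX, EReal.coe_sub,
    EReal.coe_ennreal_toReal hpos, EReal.coe_ennreal_toReal hneg]

lemma monotone_setOf_abs_le {α : Type*} (f : α → ℝ) : Monotone fun n : ℕ => {a | |f a| ≤ n} :=
  fun _ _ hmn => Set.ofPred_subset_ofPred.2 fun _ ha => ha.trans (Nat.cast_le.2 hmn)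

lemma iUnion_setOf_abs_le {α : Type*} (f : α → ℝ) : ⋃ n : ℕ, {a | |f a| ≤ n} = Set.univ :=
  Set.eq_univ_of_forall fun a => Set.mem_iUnion.2 (exists_nat_ge |f a|)

theorem relEntropy_cond_tendsto_and_dual_restriction_general
    (P Q : Measure Ω) [IsProbabilityMeasure P] [IsProbabilityMeasure Q]
    (Z : Ω → ℝ) (hZ : Measurable Z)
    (hmgf : (∫⁻ ω, ENNReal.ofReal (Real.exp (Z ω)) ∂P) ≠ ⊤)
    (hH : relEntropy Q P ≠ ⊤)
    (hneg : (∫⁻ ω, ENNReal.ofReal (-(Z ω)) ∂Q) ≠ ⊤) :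
    (Tendsto (fun n : ℕ =>
        relEntropy ((Q {ω | |Z ω| ≤ (n : ℝ)})⁻¹ • Q.restrict {ω | |Z ω| ≤ (n : ℝ)}) P)
      atTop (nhds (relEntropy Q P))) ∧
    (Tendsto (fun n : ℕ =>
        eInt ((Q {ω | |Z ω| ≤ (n : ℝ)})⁻¹ • Q.restrict {ω | |Z ω| ≤ (n : ℝ)}) Z)
      atTop (nhds (eInt Q Z))) ∧
    ((⨆ (Q' : Measure Ω) (_ : IsProbabilityMeasure Q' ∧ relEntropy Q' P ≠ ⊤ ∧
          (∫⁻ ω, ENNReal.ofReal (-(Z ω)) ∂Q') ≠ ⊤),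
        (eInt Q' Z - (relEntropy Q' P : EReal))) =
      ⨆ (Q' : Measure Ω) (_ : IsProbabilityMeasure Q' ∧ relEntropy Q' P ≠ ⊤ ∧
          Integrable Z Q'),
        (eInt Q' Z - (relEntropy Q' P : EReal))) := by
  have hB : ∀ n : ℕ, MeasurableSet {ω | |Z ω| ≤ (n : ℝ)} :=
    fun n => measurableSet_le hZ.abs measurable_const
  have integrable_iff : ∀ Q' : Measure Ω, [IsProbabilityMeasure Q'] → relEntropy Q' P ≠ ⊤ →
      (Integrable Z Q' ↔ ∫⁻ ω, ENNReal.ofReal (-(Z ω)) ∂Q' ≠ ⊤) := fun Q' _ hH' =>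
    (integrable_iff_lintegral_ofReal_ne_top hZ.aestronglyMeasurable).trans
      (and_iff_right (lintegral_ofReal_ne_top_of_relEntropy_ne_top hZ hmgf hH'))
  have hZQ : Integrable Z Q := (integrable_iff Q hH).2 hneg
  refine ⟨tendsto_relEntropy_cond_of_monotone_of_iUnion_eq_univ hH hB (monotone_setOf_abs_le Z)
    (iUnion_setOf_abs_le Z), ?_, ?_⟩
  · rw [eInt_eq_integral hZQ]
    exact (EReal.tendsto_coe.2 (tendsto_integral_cond_of_monotone_of_iUnion_eq_univ hB
      (monotone_setOf_abs_le Z) (iUnion_setOf_abs_le Z) hZQ)).congr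
      fun n => (eInt_eq_integral (hZQ.cond _)).symm
  · exact iSup_congr fun Q' => iSup_congr_Prop
      ⟨fun ⟨hprob, hH', hneg'⟩ => ⟨hprob, hH', (integrable_iff Q' hH').2 hneg'⟩,
        fun ⟨hprob, hH', hint⟩ => ⟨hprob, hH', (integrable_iff Q' hH').1 hint⟩⟩ fun _ => rfl

/-- Truncation/conditioning approximation: with `B_n = {|Z| ≤ n}` and `Q_n = Q(·|B_n)`,
one has `H(Q_n,P) → H(Q,P)` and `E_{Q_n}[Z] → E_Q[Z]`; in particular the dual
representation of `log E_P[exp Z]` is unchanged when restricting to measures under which `Z`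
is integrable. -/
theorem relEntropy_cond_tendsto_and_dual_restriction
    (P Q : Measure Ω) [IsProbabilityMeasure P] [IsProbabilityMeasure Q] (hQP : Q ≪ P)
    (Z : Ω → ℝ) (hZ : Measurable Z)
    (hmgf : (∫⁻ ω, ENNReal.ofReal (Real.exp (Z ω)) ∂P) ≠ ⊤)
    (hH : relEntropy Q P ≠ ⊤)
    (hneg : (∫⁻ ω, ENNReal.ofReal (-(Z ω)) ∂Q) ≠ ⊤) :
    (Tendsto (fun n : ℕ =>
        relEntropy ((Q {ω | |Z ω| ≤ (n : ℝ)})⁻¹ • Q.restrict {ω | |Z ω| ≤ (n : ℝ)}) P)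
      atTop (nhds (relEntropy Q P))) ∧
    (Tendsto (fun n : ℕ =>
        eInt ((Q {ω | |Z ω| ≤ (n : ℝ)})⁻¹ • Q.restrict {ω | |Z ω| ≤ (n : ℝ)}) Z)
      atTop (nhds (eInt Q Z))) ∧
    ((⨆ (Q' : Measure Ω) (_ : IsProbabilityMeasure Q' ∧ relEntropy Q' P ≠ ⊤ ∧
          (∫⁻ ω, ENNReal.ofReal (-(Z ω)) ∂Q') ≠ ⊤),
        (eInt Q' Z - (relEntropy Q' P : EReal))) =
      ⨆ (Q' : Measure Ω) (_ : IsProbabilityMeasure Q' ∧ relEntropy Q' P ≠ ⊤ ∧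
          Integrable Z Q'),
        (eInt Q' Z - (relEntropy Q' P : EReal))) :=
  relEntropy_cond_tendsto_and_dual_restriction_general P Q Z hZ hmgf hH hneg
end
end

section
/- Chain rule for relative entropy: let V, W be Polish spaces and P = μ ⊗ K, Q = μ' ⊗ K' probability measures on V × W, where μ, μ' are probabilities on V and K, K' are (universally) measurable kernels from V to probability measures on W. Then H(Q,P) = H(μ',μ) + E_{μ'}[ H(K'(v), K(v)) ]. -/
/-!
On probability measures `relEntropy` is Mathlib's Kullback–Leibler divergence `klDiv`: the
`- 1` in its definition cancels `∫ dQ/dP dP = 1`, leaving the integral of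
`klFun x = x log x + 1 - x`. Mathlib's chain rule splits `klDiv (μ' ⊗ₘ K') (μ ⊗ₘ K)` into
`klDiv μ' μ + klDiv (μ' ⊗ₘ K') (μ' ⊗ₘ K)`. Since `W` is countably generated, kernels into it have
jointly measurable densities, and `∂(μ' ⊗ₘ K')/∂(μ' ⊗ₘ K) (v, w) = ∂K'(v)/∂K(v) (w)`; integrating
over `w` first turns the last divergence into `∫⁻ v, klDiv (K' v) (K v) ∂μ'`.
-/

open MeasureTheory ENNReal NNReal Real Filter Classical
open scoped ProbabilityTheory

noncomputable section

variable {Ω : Type*} [MeasurableSpace Ω]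

open ProbabilityTheory InformationTheory

lemma relEntropy_eq_klDiv (Q P : Measure Ω) [IsProbabilityMeasure Q] [IsFiniteMeasure P] :
    relEntropy Q P = klDiv Q P := by
  by_cases hQP : Q ≪ P
  swap
  · rw [relEntropy, if_neg hQP, klDiv_of_not_ac hQP]
  have h_split : ∀ᵐ ω ∂P,
      ENNReal.ofReal ((Q.rnDeriv P ω).toReal * log (Q.rnDeriv P ω).toReal + 1)
        = ENNReal.ofReal (klFun (Q.rnDeriv P ω).toReal) + Q.rnDeriv P ω := by
    filter_upwards [Q.rnDeriv_lt_top P] with ω hω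
    conv_rhs => arg 2; rw [← ENNReal.ofReal_toReal hω.ne]
    rw [← ENNReal.ofReal_add (klFun_nonneg ENNReal.toReal_nonneg) ENNReal.toReal_nonneg,
      klFun_apply, sub_add_cancel]
  rw [relEntropy, if_pos hQP, lintegral_congr_ae h_split,
    lintegral_add_right _ (Q.measurable_rnDeriv P), Measure.lintegral_rnDeriv hQP, measure_univ,
    ENNReal.add_sub_cancel_right ENNReal.one_ne_top, klDiv_eq_lintegral_klFun_of_ac hQP]

section KernelDensity

variable {α β : Type*} [MeasurableSpace α] [MeasurableSpace β]
  [MeasurableSpace.CountableOrCountablyGenerated α β]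
  {κ η : Kernel α β} [IsFiniteKernel κ] [IsFiniteKernel η]

lemma Measure.compProd_eq_withDensity_rnDeriv {μ : Measure α} [IsFiniteMeasure μ]
    (h_ac : ∀ᵐ a ∂μ, κ a ≪ η a) :
    μ ⊗ₘ κ = (μ ⊗ₘ η).withDensity (fun p ↦ κ.rnDeriv η p.1 p.2) := by
  have hκ_eq : κ =ᵐ[μ] η.withDensity (κ.rnDeriv η) := by
    filter_upwards [h_ac] with a ha using (Kernel.withDensity_rnDeriv_eq ha).symm
  rw [Measure.compProd_congr hκ_eq, Measure.compProd_withDensity (by fun_prop)]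

lemma rnDeriv_measure_compProd_right {μ : Measure α} [IsFiniteMeasure μ]
    (h_ac : ∀ᵐ a ∂μ, κ a ≪ η a) :
    (μ ⊗ₘ κ).rnDeriv (μ ⊗ₘ η) =ᵐ[μ ⊗ₘ η] fun p ↦ κ.rnDeriv η p.1 p.2 := by
  rw [Measure.compProd_eq_withDensity_rnDeriv h_ac]
  exact Measure.rnDeriv_withDensity _ (by fun_prop)

lemma lintegral_klDiv_eq_top_of_not_ae_absolutelyContinuous {μ : Measure α}
    (h_ac : ¬ ∀ᵐ a ∂μ, κ a ≪ η a) :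
    ∫⁻ a, klDiv (κ a) (η a) ∂μ = ∞ := by
  have h_pos : μ {a | ¬ κ a ≪ η a} ≠ 0 := by simpa [ae_iff] using h_ac
  have h_meas : MeasurableSet {a | ¬ κ a ≪ η a} :=
    (Kernel.measurableSet_absolutelyContinuous κ η).compl
  refine top_le_iff.mp (le_trans ?_ (lintegral_mono (Set.indicator_le (s := {a | ¬ κ a ≪ η a})
    (f := fun _ ↦ ∞) fun a ha ↦ (klDiv_of_not_ac ha).ge)))
  rw [lintegral_indicator_const h_meas, ENNReal.top_mul h_pos]

variable (κ η) in
lemma klDiv_compProd_right (μ : Measure α) [IsFiniteMeasure μ] :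
    klDiv (μ ⊗ₘ κ) (μ ⊗ₘ η) = ∫⁻ a, klDiv (κ a) (η a) ∂μ := by
  by_cases h_ac : ∀ᵐ a ∂μ, κ a ≪ η a
  swap
  · rw [klDiv_of_not_ac (mt Measure.AbsolutelyContinuous.kernel_of_compProd h_ac),
      lintegral_klDiv_eq_top_of_not_ae_absolutelyContinuous h_ac]
  calc klDiv (μ ⊗ₘ κ) (μ ⊗ₘ η)
  _ = ∫⁻ p, ENNReal.ofReal (klFun (κ.rnDeriv η p.1 p.2).toReal) ∂(μ ⊗ₘ η) := by
    rw [klDiv_eq_lintegral_klFun_of_ac (Measure.AbsolutelyContinuous.compProd_right h_ac)]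
    refine lintegral_congr_ae ?_
    filter_upwards [rnDeriv_measure_compProd_right h_ac] with p hp using by rw [hp]
  _ = ∫⁻ a, ∫⁻ b, ENNReal.ofReal (klFun (κ.rnDeriv η a b).toReal) ∂(η a) ∂μ :=
    Measure.lintegral_compProd (by fun_prop)
  _ = ∫⁻ a, klDiv (κ a) (η a) ∂μ := by
    refine lintegral_congr_ae ?_
    filter_upwards [h_ac] with a ha
    rw [klDiv_eq_lintegral_klFun_of_ac ha]
    refine lintegral_congr_ae ?_
    filter_upwards [κ.rnDeriv_eq_rnDeriv_measure (η := η) (a := a)] with b hb using by rw [hb]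

end KernelDensity

theorem relEntropy_compProd_general
    {V W : Type*} [MeasurableSpace V]
    [MeasurableSpace W] [TopologicalSpace W] [PolishSpace W] [BorelSpace W]
    (μ μ' : Measure V) [IsProbabilityMeasure μ] [IsProbabilityMeasure μ']
    (K K' : ProbabilityTheory.Kernel V W)
    [ProbabilityTheory.IsMarkovKernel K] [ProbabilityTheory.IsMarkovKernel K'] :
    relEntropy (μ' ⊗ₘ K') (μ ⊗ₘ K) =
      relEntropy μ' μ + ∫⁻ v, relEntropy (K' v) (K v) ∂μ' := by
  simp_rw [relEntropy_eq_klDiv]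
  rw [klDiv_compProd_eq_add, klDiv_compProd_right]

/-- Chain rule for the relative entropy:
`H(μ' ⊗ K', μ ⊗ K) = H(μ',μ) + E_{μ'}[H(K'(v),K(v))]`. -/
theorem relEntropy_compProd
    {V W : Type*} [MeasurableSpace V] [TopologicalSpace V] [PolishSpace V] [BorelSpace V]
    [MeasurableSpace W] [TopologicalSpace W] [PolishSpace W] [BorelSpace W]
    (μ μ' : Measure V) [IsProbabilityMeasure μ] [IsProbabilityMeasure μ']
    (K K' : ProbabilityTheory.Kernel V W)
    [ProbabilityTheory.IsMarkovKernel K] [ProbabilityTheory.IsMarkovKernel K'] :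
    relEntropy (μ' ⊗ₘ K') (μ ⊗ₘ K) =
      relEntropy μ' μ + ∫⁻ v, relEntropy (K' v) (K v) ∂μ' :=
  relEntropy_compProd_general μ μ' K K'
end
end
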